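/- arXiv:2505.07952 — 5 statements merged into one kernel-verified Lean document; each statement's English description precedes it below -/
import Mathlib

section
/- In the ring of formal power series over ℚ in two variables t_a, t_d, one has (1 − t_a)^5 · (1 − t_d)^4 · ∑_{m,k ≥ 0} ((m+1)(k+1)(m+k+2)(k+2)(m+k+3)/12) · t_d^m t_a^k = 1 + t_a − 4 t_a t_d + t_a t_d² + t_a² t_d². That is, the two-variable generating function of the dimensions of the su(4) representations [m,k,0] equals the claimed closed form of the FC_2 Hilbert series refined in the two abelian fugacities. -/
open MvPowerSeries Finsupp

/-- The two-variable generating function whose coefficient of `t_a^k t_d^m`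
(`t_a` = variable `0`, `t_d` = variable `1`) is the dimension
`(m+1)(k+1)(m+k+2)(k+2)(m+k+3)/12` of the `su(4)` representation `[m,k,0]`. -/
noncomputable def fc2Refined : MvPowerSeries (Fin 2) ℚ :=
  fun e => ((e 1 : ℚ) + 1) * ((e 0 : ℚ) + 1) * ((e 1 : ℚ) + (e 0 : ℚ) + 2) *
    ((e 0 : ℚ) + 2) * ((e 1 : ℚ) + (e 0 : ℚ) + 3) / 12

lemma fc2_eval0 (x y : ℕ) : (single 0 x + single 1 y : Fin 2 →₀ ℕ) 0 = x := by simp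
lemma fc2_eval1 (x y : ℕ) : (single 0 x + single 1 y : Fin 2 →₀ ℕ) 1 = y := by simp

lemma fc2_e_eq (e : Fin 2 →₀ ℕ) : e = single 0 (e 0) + single 1 (e 1) := by
  ext s; fin_cases s <;> simp

lemma fc2_le_iff (i j a b : ℕ) :
    (single 0 i + single 1 j : Fin 2 →₀ ℕ) ≤ single 0 a + single 1 b ↔ i ≤ a ∧ j ≤ b := by
  rw [Finsupp.le_def]
  constructor
  · intro h; exact ⟨by simpa [fc2_eval0] using h 0, by simpa [fc2_eval1] using h 1⟩
  · rintro ⟨h1, h2⟩ s; fin_cases s <;> simpa [fc2_eval0, fc2_eval1]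

lemma fc2_sub_eq (i j a b : ℕ) :
    (single 0 a + single 1 b : Fin 2 →₀ ℕ) - (single 0 i + single 1 j)
      = single 0 (a - i) + single 1 (b - j) := by
  ext s; fin_cases s <;> simp [Finsupp.tsub_apply, fc2_eval0, fc2_eval1]

lemma fc2_key (c : ℚ) (i j a b : ℕ) (f : MvPowerSeries (Fin 2) ℚ) :
    (coeff (R := ℚ) (single 0 a + single 1 b)) (C (σ := Fin 2) (R := ℚ) c * (X 0 ^ i * X 1 ^ j * f))
      = if i ≤ a ∧ j ≤ b then c * coeff (R := ℚ) (single 0 (a - i) + single 1 (b - j)) f else 0 := by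
  rw [coeff_C_mul, X_pow_eq, X_pow_eq, monomial_mul_monomial, one_mul]
  simp only [coeff_monomial_mul, fc2_le_iff, fc2_sub_eq, one_mul]
  split <;> simp

lemma fc2_coeff_one (x y : ℕ) :
    (coeff (R := ℚ) (single 0 x + single 1 y)) (1 : MvPowerSeries (Fin 2) ℚ)
      = if x = 0 ∧ y = 0 then 1 else 0 := by
  rw [coeff_one]
  congr 1
  simp only [eq_iff_iff]
  constructor
  · intro h
    exact ⟨by have := congrArg (fun g => g 0) h; simpa [fc2_eval0] using this,
      by have := congrArg (fun g => g 1) h; simpa [fc2_eval1] using this⟩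
  · rintro ⟨rfl, rfl⟩; simp

lemma fc2_coeff_F (x y : ℕ) :
    (coeff (R := ℚ) (single 0 x + single 1 y)) fc2Refined
      = ((y : ℚ) + 1) * ((x : ℚ) + 1) * ((y : ℚ) + (x : ℚ) + 2) * ((x : ℚ) + 2) *
          ((y : ℚ) + (x : ℚ) + 3) / 12 := by
  rw [MvPowerSeries.coeff_apply]
  simp [fc2Refined]

lemma fc2_expandL (f : MvPowerSeries (Fin 2) ℚ) :
    (1 - X 0 : MvPowerSeries (Fin 2) ℚ) ^ 5 * (1 - X 1 : MvPowerSeries (Fin 2) ℚ) ^ 4 * f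
      = C (σ := Fin 2) (R := ℚ) (1) * (X 0 ^ 0 * X 1 ^ 0 * f) +
      C (σ := Fin 2) (R := ℚ) (-4) * (X 0 ^ 0 * X 1 ^ 1 * f) +
      C (σ := Fin 2) (R := ℚ) (6) * (X 0 ^ 0 * X 1 ^ 2 * f) +
      C (σ := Fin 2) (R := ℚ) (-4) * (X 0 ^ 0 * X 1 ^ 3 * f) +
      C (σ := Fin 2) (R := ℚ) (1) * (X 0 ^ 0 * X 1 ^ 4 * f) +
      C (σ := Fin 2) (R := ℚ) (-5) * (X 0 ^ 1 * X 1 ^ 0 * f) +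
      C (σ := Fin 2) (R := ℚ) (20) * (X 0 ^ 1 * X 1 ^ 1 * f) +
      C (σ := Fin 2) (R := ℚ) (-30) * (X 0 ^ 1 * X 1 ^ 2 * f) +
      C (σ := Fin 2) (R := ℚ) (20) * (X 0 ^ 1 * X 1 ^ 3 * f) +
      C (σ := Fin 2) (R := ℚ) (-5) * (X 0 ^ 1 * X 1 ^ 4 * f) +
      C (σ := Fin 2) (R := ℚ) (10) * (X 0 ^ 2 * X 1 ^ 0 * f) +
      C (σ := Fin 2) (R := ℚ) (-40) * (X 0 ^ 2 * X 1 ^ 1 * f) +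
      C (σ := Fin 2) (R := ℚ) (60) * (X 0 ^ 2 * X 1 ^ 2 * f) +
      C (σ := Fin 2) (R := ℚ) (-40) * (X 0 ^ 2 * X 1 ^ 3 * f) +
      C (σ := Fin 2) (R := ℚ) (10) * (X 0 ^ 2 * X 1 ^ 4 * f) +
      C (σ := Fin 2) (R := ℚ) (-10) * (X 0 ^ 3 * X 1 ^ 0 * f) +
      C (σ := Fin 2) (R := ℚ) (40) * (X 0 ^ 3 * X 1 ^ 1 * f) +
      C (σ := Fin 2) (R := ℚ) (-60) * (X 0 ^ 3 * X 1 ^ 2 * f) +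
      C (σ := Fin 2) (R := ℚ) (40) * (X 0 ^ 3 * X 1 ^ 3 * f) +
      C (σ := Fin 2) (R := ℚ) (-10) * (X 0 ^ 3 * X 1 ^ 4 * f) +
      C (σ := Fin 2) (R := ℚ) (5) * (X 0 ^ 4 * X 1 ^ 0 * f) +
      C (σ := Fin 2) (R := ℚ) (-20) * (X 0 ^ 4 * X 1 ^ 1 * f) +
      C (σ := Fin 2) (R := ℚ) (30) * (X 0 ^ 4 * X 1 ^ 2 * f) +
      C (σ := Fin 2) (R := ℚ) (-20) * (X 0 ^ 4 * X 1 ^ 3 * f) +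
      C (σ := Fin 2) (R := ℚ) (5) * (X 0 ^ 4 * X 1 ^ 4 * f) +
      C (σ := Fin 2) (R := ℚ) (-1) * (X 0 ^ 5 * X 1 ^ 0 * f) +
      C (σ := Fin 2) (R := ℚ) (4) * (X 0 ^ 5 * X 1 ^ 1 * f) +
      C (σ := Fin 2) (R := ℚ) (-6) * (X 0 ^ 5 * X 1 ^ 2 * f) +
      C (σ := Fin 2) (R := ℚ) (4) * (X 0 ^ 5 * X 1 ^ 3 * f) +
      C (σ := Fin 2) (R := ℚ) (-1) * (X 0 ^ 5 * X 1 ^ 4 * f) := by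
  simp only [map_neg, map_ofNat, map_one]
  ring

lemma fc2_expandR :
    (1 : MvPowerSeries (Fin 2) ℚ) + X 0 - 4 * (X 0 * X 1) + X 0 * X 1 ^ 2 + X 0 ^ 2 * X 1 ^ 2
      = C (σ := Fin 2) (R := ℚ) (1) * (X 0 ^ 0 * X 1 ^ 0 * (1 : MvPowerSeries (Fin 2) ℚ)) +
      C (σ := Fin 2) (R := ℚ) (1) * (X 0 ^ 1 * X 1 ^ 0 * (1 : MvPowerSeries (Fin 2) ℚ)) +
      C (σ := Fin 2) (R := ℚ) (-4) * (X 0 ^ 1 * X 1 ^ 1 * (1 : MvPowerSeries (Fin 2) ℚ)) +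
      C (σ := Fin 2) (R := ℚ) (1) * (X 0 ^ 1 * X 1 ^ 2 * (1 : MvPowerSeries (Fin 2) ℚ)) +
      C (σ := Fin 2) (R := ℚ) (1) * (X 0 ^ 2 * X 1 ^ 2 * (1 : MvPowerSeries (Fin 2) ℚ)) := by
  simp only [map_neg, map_ofNat, map_one]
  ring

set_option maxHeartbeats 2000000 in
/-- The refined `FC_2` Hilbert series identity:
`(1 − t_a)^5 (1 − t_d)^4 · ∑_{m,k} dim[m,k,0] t_d^m t_a^k
  = 1 + t_a − 4 t_a t_d + t_a t_d² + t_a² t_d²`. -/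
theorem fc2_refined_hilbert_series :
    (1 - (MvPowerSeries.X 0 : MvPowerSeries (Fin 2) ℚ)) ^ 5 *
        (1 - (MvPowerSeries.X 1 : MvPowerSeries (Fin 2) ℚ)) ^ 4 * fc2Refined =
      1 + MvPowerSeries.X 0 - 4 * (MvPowerSeries.X 0 * MvPowerSeries.X 1) +
        MvPowerSeries.X 0 * MvPowerSeries.X 1 ^ 2 +
        MvPowerSeries.X 0 ^ 2 * MvPowerSeries.X 1 ^ 2 := by
  ext e
  obtain ⟨a, b, rfl⟩ : ∃ a b, e = single 0 a + single 1 b := ⟨e 0, e 1, fc2_e_eq e⟩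
  rw [fc2_expandL fc2Refined, fc2_expandR]
  simp only [map_add, fc2_key, fc2_coeff_one, fc2_coeff_F]
  rcases Nat.lt_or_ge a 5 with ha | ha
  · rcases Nat.lt_or_ge b 4 with hb | hb
    · interval_cases a <;> interval_cases b <;> norm_num
    · obtain ⟨b, rfl⟩ : ∃ b', b = b' + 4 := ⟨b - 4, by omega⟩
      interval_cases a <;>
        · simp [show 1 ≤ b + 4 from by omega, show 2 ≤ b + 4 from by omega, show 3 ≤ b + 4 from by omega, show 4 ≤ b + 4 from by omega, show b + 4 - 1 = b + 3 from rfl, show b + 4 - 2 = b + 2 from rfl, show b + 4 - 3 = b + 1 from rfl, show b + 4 - 4 = b from by omega, show ¬(b + 4 = 0) from by omega, show ¬(b + 3 = 0) from by omega, show ¬(b + 2 = 0) from by omega]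
          ring
  · obtain ⟨a, rfl⟩ : ∃ a', a = a' + 5 := ⟨a - 5, by omega⟩
    rcases Nat.lt_or_ge b 4 with hb | hb
    · interval_cases b <;>
        · simp [show 1 ≤ a + 5 from by omega, show 2 ≤ a + 5 from by omega, show 3 ≤ a + 5 from by omega, show 4 ≤ a + 5 from by omega, show 5 ≤ a + 5 from by omega, show a + 5 - 1 = a + 4 from rfl, show a + 5 - 2 = a + 3 from rfl, show a + 5 - 3 = a + 2 from rfl, show a + 5 - 4 = a + 1 from rfl, show a + 5 - 5 = a + 0 from rfl, show ¬(a + 5 = 0) from by omega, show ¬(a + 4 = 0) from by omega, show ¬(a + 3 = 0) from by omega]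
          ring
    · obtain ⟨b, rfl⟩ : ∃ b', b = b' + 4 := ⟨b - 4, by omega⟩
      simp [show 1 ≤ a + 5 from by omega, show 2 ≤ a + 5 from by omega, show 3 ≤ a + 5 from by omega, show 4 ≤ a + 5 from by omega, show 5 ≤ a + 5 from by omega, show a + 5 - 1 = a + 4 from rfl, show a + 5 - 2 = a + 3 from rfl, show a + 5 - 3 = a + 2 from rfl, show a + 5 - 4 = a + 1 from rfl, show a + 5 - 5 = a + 0 from rfl, show ¬(a + 5 = 0) from by omega, show ¬(a + 4 = 0) from by omega, show ¬(a + 3 = 0) from by omega, show 1 ≤ b + 4 from by omega, show 2 ≤ b + 4 from by omega, show 3 ≤ b + 4 from by omega, show 4 ≤ b + 4 from by omega, show b + 4 - 1 = b + 3 from rfl, show b + 4 - 2 = b + 2 from rfl, show b + 4 - 3 = b + 1 from rfl, show b + 4 - 4 = b from by omega, show ¬(b + 4 = 0) from by omega, show ¬(b + 3 = 0) from by omega, show ¬(b + 2 = 0) from by omega]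
      ring
end

section
/- In ℚ[[t]], one has (1 − t)^{11} · ∑_{k≥0} (1/21)·C(k+5, 5)·C(k+7, 5) · t^k = 1 + 5t + 5t² + t³. That is, the generating function of the dimensions of the so(10) representations [0,0,0,0,k] equals (1+5t+5t²+t³)/(1−t)^{11}, the unrefined Hilbert series of the FH_2 moduli space. -/
open PowerSeries

lemma fh2_cast_choose5 (m : ℕ) :
    (((m + 5).choose 5 : ℚ)) = (m+1)*(m+2)*(m+3)*(m+4)*(m+5)/120 := by
  rw [Nat.cast_choose ℚ (by omega : 5 ≤ m + 5)]
  have h : (m + 5).factorial = (m+1)*(m+2)*(m+3)*(m+4)*(m+5) * m.factorial := by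
    simp [Nat.factorial_succ]; ring
  rw [h, Nat.add_sub_cancel]
  have hm : (m.factorial : ℚ) ≠ 0 := by positivity
  norm_num [Nat.factorial]
  field_simp

lemma fh2_cast_choose10 (m : ℕ) :
    (((10 + m).choose 10 : ℚ)) =
      (m+1)*(m+2)*(m+3)*(m+4)*(m+5)*(m+6)*(m+7)*(m+8)*(m+9)*(m+10)/3628800 := by
  have e : 10 + m = m + 10 := by omega
  rw [e, Nat.cast_choose ℚ (by omega : 10 ≤ m + 10)]
  have h : (m + 10).factorial =
      (m+1)*(m+2)*(m+3)*(m+4)*(m+5)*(m+6)*(m+7)*(m+8)*(m+9)*(m+10) * m.factorial := by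
    simp [Nat.factorial_succ]; ring
  rw [h, Nat.add_sub_cancel]
  have hm : (m.factorial : ℚ) ≠ 0 := by positivity
  norm_num [Nat.factorial]
  field_simp

/-- The generating function of the dimensions `C(k+5,5)·C(k+7,5)/21` of the `so(10)`
representations `[0,0,0,0,k]` equals `(1+5t+5t²+t³)/(1−t)^{11}`, the unrefined
Hilbert series of the `FH_2` moduli space. -/
theorem fh2_hilbert_series :
    (1 - (PowerSeries.X : PowerSeries ℚ)) ^ 11 *
        PowerSeries.mk (fun k : ℕ =>
          (((k + 5).choose 5 : ℚ) * ((k + 7).choose 5 : ℚ)) / 21) =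
      1 + 5 * PowerSeries.X + 5 * PowerSeries.X ^ 2 + PowerSeries.X ^ 3 := by
  have hpow : (1 - (PowerSeries.X : PowerSeries ℚ)) ^ 11 =
      ((invOneSubPow ℚ 11)⁻¹ : (PowerSeries ℚ)ˣ) := by
    rw [← invOneSubPow_inv_eq_one_sub_pow]; rfl
  rw [hpow, Units.inv_mul_eq_iff_eq_mul]
  have hval : ((invOneSubPow ℚ 11 : (PowerSeries ℚ)ˣ) : PowerSeries ℚ) =
      PowerSeries.mk (fun n => ((10 + n).choose 10 : ℚ)) := rfl
  rw [hval]
  set g : ℕ → ℚ := fun n => ((10 + n).choose 10 : ℚ) with hg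
  ext n
  have hX : ∀ k : ℕ, (coeff n) (PowerSeries.mk g * X ^ k) =
      if k ≤ n then g (n - k) else 0 := by
    intro k
    rw [PowerSeries.coeff_mul_X_pow']
    split <;> simp [coeff_mk]
  have h5 : (5 : PowerSeries ℚ) = C 5 := by
    rw [map_ofNat]
  rw [mul_add, mul_add, mul_add, mul_one]
  rw [show PowerSeries.mk g * (5 * X) = (PowerSeries.mk g * X ^ 1) * C 5 by
      rw [← h5]; ring,
    show PowerSeries.mk g * (5 * X ^ 2) = (PowerSeries.mk g * X ^ 2) * C 5 by
      rw [← h5]; ring]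
  simp only [map_add, coeff_mk, coeff_mul_C, hX]
  match n with
  | 0 => norm_num [hg, Nat.choose]
  | 1 => norm_num [hg, Nat.choose]
  | 2 => norm_num [hg, Nat.choose]
  | (m + 3) =>
    have e1 : m + 3 - 1 = m + 2 := by omega
    have e2 : m + 3 - 2 = m + 1 := by omega
    have e3 : m + 3 - 3 = m := by omega
    simp only [if_pos (by omega : 1 ≤ m + 3), if_pos (by omega : 2 ≤ m + 3),
      if_pos (by omega : 3 ≤ m + 3), e1, e2, e3, hg]
    rw [show m + 3 + 5 = (m + 3) + 5 from rfl, fh2_cast_choose5 (m + 3),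
      show m + 3 + 7 = (m + 5) + 5 by omega, fh2_cast_choose5 (m + 5),
      fh2_cast_choose10 (m + 3), fh2_cast_choose10 (m + 2), fh2_cast_choose10 (m + 1),
      fh2_cast_choose10 m]
    push_cast
    field_simp
    ring
end

section
/- For every natural number n: (1/(1!·2!·3!·4!)) · ∑_{i=1}^{n} ∑_{j=1}^{n} ∑_{k=1}^{n} ∑_{l=1}^{n} |det V(i,j,k,l)| = (1/21)·C(n+1, 5)·C(n+3, 5), where V(i,j,k,l) is the 4×4 Vandermonde matrix with nodes (i,j,k,l), so that |det V(i,j,k,l)| = |(j−i)(k−i)(l−i)(k−j)(l−j)(l−k)|, and 1!·2!·3!·4! = 288. Equivalently, 21 · ∑_{1≤i,j,k,l≤n} |det V(i,j,k,l)| = 288 · C(n+1,5) · C(n+3,5). (The right-hand side is 288 times the coefficient of t^{n−4} in the FH_2 Hilbert series (1+5t+5t²+t³)/(1−t)^{11}.) -/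
open Finset

def P3 (a b c : ℤ) : ℤ := |(b-a)*(c-a)*(c-b)|
def P4 (a b c d : ℤ) : ℤ := |(b-a)*(c-a)*(d-a)*(c-b)*(d-b)*(d-c)|

@[simp] lemma P3_z1 (a b : ℤ) : P3 a a b = 0 := by simp [P3]
@[simp] lemma P3_z2 (a b : ℤ) : P3 a b a = 0 := by simp [P3]
@[simp] lemma P3_z3 (a b : ℤ) : P3 a b b = 0 := by simp [P3]

@[simp] lemma P4_z12 (a b c : ℤ) : P4 a a b c = 0 := by simp [P4]
@[simp] lemma P4_z13 (a b c : ℤ) : P4 a b a c = 0 := by simp [P4]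
@[simp] lemma P4_z14 (a b c : ℤ) : P4 a b c a = 0 := by simp [P4]
@[simp] lemma P4_z23 (a b c : ℤ) : P4 a b b c = 0 := by simp [P4]
@[simp] lemma P4_z24 (a b c : ℤ) : P4 a b c b = 0 := by simp [P4]
@[simp] lemma P4_z34 (a b c : ℤ) : P4 a b c c = 0 := by simp [P4]

lemma P3_top3 {i j n : ℕ} (hi : i ≤ n) (hj : j ≤ n) :
    P3 (i:ℤ) (j:ℤ) ((n+1 : ℕ):ℤ) = ((n:ℤ)+1-(i:ℤ))*((n:ℤ)+1-(j:ℤ))*|(j:ℤ)-(i:ℤ)| := by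
  simp only [P3, abs_mul]
  rw [abs_of_nonneg (by push_cast; omega : (0:ℤ) ≤ ((n+1:ℕ):ℤ) - (i:ℤ)),
      abs_of_nonneg (by push_cast; omega : (0:ℤ) ≤ ((n+1:ℕ):ℤ) - (j:ℤ))]
  push_cast; ring

lemma P3_top2 {i k n : ℕ} (hi : i ≤ n) (hk : k ≤ n) :
    P3 (i:ℤ) ((n+1 : ℕ):ℤ) (k:ℤ) = ((n:ℤ)+1-(i:ℤ))*((n:ℤ)+1-(k:ℤ))*|(k:ℤ)-(i:ℤ)| := by
  simp only [P3, abs_mul]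
  rw [abs_of_nonneg (by push_cast; omega : (0:ℤ) ≤ ((n+1:ℕ):ℤ) - (i:ℤ)),
      abs_of_nonpos (by push_cast; omega : (k:ℤ) - ((n+1:ℕ):ℤ) ≤ 0)]
  push_cast; ring

lemma P3_top1 {j k n : ℕ} (hj : j ≤ n) (hk : k ≤ n) :
    P3 ((n+1 : ℕ):ℤ) (j:ℤ) (k:ℤ) = ((n:ℤ)+1-(j:ℤ))*((n:ℤ)+1-(k:ℤ))*|(k:ℤ)-(j:ℤ)| := by
  simp only [P3, abs_mul]
  rw [abs_of_nonpos (by push_cast; omega : (j:ℤ) - ((n+1:ℕ):ℤ) ≤ 0),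
      abs_of_nonpos (by push_cast; omega : (k:ℤ) - ((n+1:ℕ):ℤ) ≤ 0)]
  push_cast; ring

lemma P4_top4 {i j k n : ℕ} (hi : i ≤ n) (hj : j ≤ n) (hk : k ≤ n) :
    P4 (i:ℤ) (j:ℤ) (k:ℤ) ((n+1 : ℕ):ℤ)
      = ((n:ℤ)+1-(i:ℤ))*((n:ℤ)+1-(j:ℤ))*((n:ℤ)+1-(k:ℤ))*P3 (i:ℤ) (j:ℤ) (k:ℤ) := by
  simp only [P4, P3, abs_mul]
  rw [abs_of_nonneg (by push_cast; omega : (0:ℤ) ≤ ((n+1:ℕ):ℤ) - (i:ℤ)),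
      abs_of_nonneg (by push_cast; omega : (0:ℤ) ≤ ((n+1:ℕ):ℤ) - (j:ℤ)),
      abs_of_nonneg (by push_cast; omega : (0:ℤ) ≤ ((n+1:ℕ):ℤ) - (k:ℤ))]
  push_cast; ring

lemma P4_top3 {i j k n : ℕ} (hi : i ≤ n) (hj : j ≤ n) (hk : k ≤ n) :
    P4 (i:ℤ) (j:ℤ) ((n+1 : ℕ):ℤ) (k:ℤ)
      = ((n:ℤ)+1-(i:ℤ))*((n:ℤ)+1-(j:ℤ))*((n:ℤ)+1-(k:ℤ))*P3 (i:ℤ) (j:ℤ) (k:ℤ) := by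
  simp only [P4, P3, abs_mul]
  rw [abs_of_nonneg (by push_cast; omega : (0:ℤ) ≤ ((n+1:ℕ):ℤ) - (i:ℤ)),
      abs_of_nonneg (by push_cast; omega : (0:ℤ) ≤ ((n+1:ℕ):ℤ) - (j:ℤ)),
      abs_of_nonpos (by push_cast; omega : (k:ℤ) - ((n+1:ℕ):ℤ) ≤ 0)]
  push_cast; ring

lemma P4_top2 {i j k n : ℕ} (hi : i ≤ n) (hj : j ≤ n) (hk : k ≤ n) :
    P4 (i:ℤ) ((n+1 : ℕ):ℤ) (j:ℤ) (k:ℤ)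
      = ((n:ℤ)+1-(i:ℤ))*((n:ℤ)+1-(j:ℤ))*((n:ℤ)+1-(k:ℤ))*P3 (i:ℤ) (j:ℤ) (k:ℤ) := by
  simp only [P4, P3, abs_mul]
  rw [abs_of_nonneg (by push_cast; omega : (0:ℤ) ≤ ((n+1:ℕ):ℤ) - (i:ℤ)),
      abs_of_nonpos (by push_cast; omega : (j:ℤ) - ((n+1:ℕ):ℤ) ≤ 0),
      abs_of_nonpos (by push_cast; omega : (k:ℤ) - ((n+1:ℕ):ℤ) ≤ 0)]
  push_cast; ring

lemma P4_top1 {i j k n : ℕ} (hi : i ≤ n) (hj : j ≤ n) (hk : k ≤ n) :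
    P4 ((n+1 : ℕ):ℤ) (i:ℤ) (j:ℤ) (k:ℤ)
      = ((n:ℤ)+1-(i:ℤ))*((n:ℤ)+1-(j:ℤ))*((n:ℤ)+1-(k:ℤ))*P3 (i:ℤ) (j:ℤ) (k:ℤ) := by
  simp only [P4, P3, abs_mul]
  rw [abs_of_nonpos (by push_cast; omega : (i:ℤ) - ((n+1:ℕ):ℤ) ≤ 0),
      abs_of_nonpos (by push_cast; omega : (j:ℤ) - ((n+1:ℕ):ℤ) ≤ 0),
      abs_of_nonpos (by push_cast; omega : (k:ℤ) - ((n+1:ℕ):ℤ) ≤ 0)]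
  push_cast; ring

def DS (m t u : ℤ) (n : ℕ) : ℤ := ∑ i ∈ Icc 1 n, (m-(i:ℤ))*(t-(i:ℤ))*(u-(i:ℤ))

def C3S (m t : ℤ) (n : ℕ) : ℤ :=
  ∑ i ∈ Icc 1 n, ∑ j ∈ Icc 1 n, (m-(i:ℤ))*(m-(j:ℤ))*(t-(i:ℤ))*(t-(j:ℤ))*|(j:ℤ)-(i:ℤ)|

lemma DS_closed (m t u : ℤ) (n : ℕ) : 12 * DS m t u n =
    (12)*m*t*u*(n:ℤ) + (-6)*m*t*(n:ℤ)*(n:ℤ) + (-6)*m*t*(n:ℤ) + (-6)*m*u*(n:ℤ)*(n:ℤ) + (-6)*m*u*(n:ℤ) + (4)*m*(n:ℤ)*(n:ℤ)*(n:ℤ) + (6)*m*(n:ℤ)*(n:ℤ) + (2)*m*(n:ℤ) + (-6)*t*u*(n:ℤ)*(n:ℤ) + (-6)*t*u*(n:ℤ) + (4)*t*(n:ℤ)*(n:ℤ)*(n:ℤ) + (6)*t*(n:ℤ)*(n:ℤ) + (2)*t*(n:ℤ) + (4)*u*(n:ℤ)*(n:ℤ)*(n:ℤ) + (6)*u*(n:ℤ)*(n:ℤ)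 + (2)*u*(n:ℤ) + (-3)*(n:ℤ)*(n:ℤ)*(n:ℤ)*(n:ℤ) + (-6)*(n:ℤ)*(n:ℤ)*(n:ℤ) + (-3)*(n:ℤ)*(n:ℤ) := by
  induction n with
  | zero => simp [DS]
  | succ k ih =>
    rw [DS, Finset.sum_Icc_succ_top (Nat.le_add_left 1 k), ← DS]
    push_cast
    push_cast at ih
    linear_combination ih

lemma C3S_rec (m t : ℤ) (n : ℕ) :
    C3S m t (n+1) = C3S m t n + 2*(m-((n:ℤ)+1))*(t-((n:ℤ)+1)) * DS m t ((n:ℤ)+1) n := by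
  simp only [C3S, DS]
  simp only [Finset.sum_Icc_succ_top (Nat.le_add_left 1 n)]
  simp only [sub_self, abs_zero, mul_zero, Finset.sum_add_distrib, add_zero]
  have h1 : (∑ i ∈ Icc 1 n, (m-(i:ℤ))*(m-((n+1:ℕ):ℤ))*(t-(i:ℤ))*(t-((n+1:ℕ):ℤ))*|((n+1:ℕ):ℤ)-(i:ℤ)|)
      = (m-((n:ℤ)+1))*(t-((n:ℤ)+1)) * ∑ i ∈ Icc 1 n, (m-(i:ℤ))*(t-(i:ℤ))*((n:ℤ)+1-(i:ℤ)) := by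
    rw [Finset.mul_sum]
    refine Finset.sum_congr rfl fun i hi => ?_
    have hib := (Finset.mem_Icc.mp hi).2
    rw [abs_of_nonneg (by push_cast; omega : (0:ℤ) ≤ ((n+1:ℕ):ℤ) - (i:ℤ))]
    push_cast; ring
  have h2 : (∑ j ∈ Icc 1 n, (m-((n+1:ℕ):ℤ))*(m-(j:ℤ))*(t-((n+1:ℕ):ℤ))*(t-(j:ℤ))*|(j:ℤ)-((n+1:ℕ):ℤ)|)
      = (m-((n:ℤ)+1))*(t-((n:ℤ)+1)) * ∑ i ∈ Icc 1 n, (m-(i:ℤ))*(t-(i:ℤ))*((n:ℤ)+1-(i:ℤ)) := by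
    rw [Finset.mul_sum]
    refine Finset.sum_congr rfl fun j hj => ?_
    have hjb := (Finset.mem_Icc.mp hj).2
    rw [abs_of_nonpos (by push_cast; omega : (j:ℤ) - ((n+1:ℕ):ℤ) ≤ 0)]
    push_cast; ring
  rw [h1, h2]
  ring


def B2S (m : ℤ) (n : ℕ) : ℤ :=
  ∑ i ∈ Icc 1 n, ∑ j ∈ Icc 1 n, ∑ k ∈ Icc 1 n,
    (m-(i:ℤ))*(m-(j:ℤ))*(m-(k:ℤ))*P3 (i:ℤ) (j:ℤ) (k:ℤ)

lemma C3S_closed (m t : ℤ) (n : ℕ) : 420 * C3S m t n =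
    (140)*m*m*t*t*(n:ℤ)*(n:ℤ)*(n:ℤ) + (-140)*m*m*t*t*(n:ℤ) + (-140)*m*m*t*(n:ℤ)*(n:ℤ)*(n:ℤ)*(n:ℤ) + (-140)*m*m*t*(n:ℤ)*(n:ℤ)*(n:ℤ) + (140)*m*m*t*(n:ℤ)*(n:ℤ) + (140)*m*m*t*(n:ℤ) + (28)*m*m*(n:ℤ)*(n:ℤ)*(n:ℤ)*(n:ℤ)*(n:ℤ) + (70)*m*m*(n:ℤ)*(n:ℤ)*(n:ℤ)*(n:ℤ) + (-70)*m*m*(n:ℤ)*(n:ℤ) + (-28)*m*m*(n:ℤ) + (-140)*m*t*t*(n:ℤ)*(n:ℤ)*(n:ℤ)*(n:ℤ) + (-140)*m*t*t*(n:ℤ)*(n:ℤ)*(n:ℤ) + (140)*m*t*t*(n:ℤ)*(n:ℤ) + (140)*m*t*t*(n:ℤ) + (154)*m*t*(n:ℤ)*(n:ℤ)*(n:ℤ)*(n:ℤ)*(n:ℤ) + (280)*m*t*(n:ℤ)*(n:ℤ)*(n:ℤ)*(n:ℤ) + (-70)*m*t*(n:ℤ)*(n:ℤ)*(n:ℤ)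 + (-280)*m*t*(n:ℤ)*(n:ℤ) + (-84)*m*t*(n:ℤ) + (-35)*m*(n:ℤ)*(n:ℤ)*(n:ℤ)*(n:ℤ)*(n:ℤ)*(n:ℤ) + (-105)*m*(n:ℤ)*(n:ℤ)*(n:ℤ)*(n:ℤ)*(n:ℤ) + (-35)*m*(n:ℤ)*(n:ℤ)*(n:ℤ)*(n:ℤ) + (105)*m*(n:ℤ)*(n:ℤ)*(n:ℤ) + (70)*m*(n:ℤ)*(n:ℤ) + (28)*t*t*(n:ℤ)*(n:ℤ)*(n:ℤ)*(n:ℤ)*(n:ℤ) + (70)*t*t*(n:ℤ)*(n:ℤ)*(n:ℤ)*(n:ℤ) + (-70)*t*t*(n:ℤ)*(n:ℤ) + (-28)*t*t*(n:ℤ) + (-35)*t*(n:ℤ)*(n:ℤ)*(n:ℤ)*(n:ℤ)*(n:ℤ)*(n:ℤ) + (-105)*t*(n:ℤ)*(n:ℤ)*(n:ℤ)*(n:ℤ)*(n:ℤ) + (-35)*t*(n:ℤ)*(n:ℤ)*(n:ℤ)*(n:ℤ) + (105)*t*(n:ℤ)*(n:ℤ)*(n:ℤ) + (70)*t*(n:ℤ)*(n:ℤ)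 + (10)*(n:ℤ)*(n:ℤ)*(n:ℤ)*(n:ℤ)*(n:ℤ)*(n:ℤ)*(n:ℤ) + (35)*(n:ℤ)*(n:ℤ)*(n:ℤ)*(n:ℤ)*(n:ℤ)*(n:ℤ) + (21)*(n:ℤ)*(n:ℤ)*(n:ℤ)*(n:ℤ)*(n:ℤ) + (-35)*(n:ℤ)*(n:ℤ)*(n:ℤ)*(n:ℤ) + (-35)*(n:ℤ)*(n:ℤ)*(n:ℤ) + (4)*(n:ℤ) := by
  induction n with
  | zero => simp [C3S]
  | succ k ih =>
    rw [C3S_rec]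
    have hD := DS_closed m t ((k:ℤ)+1) k
    push_cast
    push_cast at ih hD
    linear_combination ih + 70*(m-(k:ℤ)-1)*(t-(k:ℤ)-1)*hD

lemma B2S_rec (m : ℤ) (n : ℕ) :
    B2S m (n+1) = B2S m n + 3*(m-((n:ℤ)+1)) * C3S m ((n:ℤ)+1) n := by
  simp only [B2S, C3S]
  simp only [Finset.sum_Icc_succ_top (Nat.le_add_left 1 n)]
  simp only [P3_z1, P3_z2, P3_z3, mul_zero, Finset.sum_const_zero, add_zero,
    Finset.sum_add_distrib]
  have h3 : (∑ i ∈ Icc 1 n, ∑ j ∈ Icc 1 n,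
        (m-(i:ℤ))*(m-(j:ℤ))*(m-((n+1:ℕ):ℤ))*P3 (i:ℤ) (j:ℤ) ((n+1:ℕ):ℤ))
      = (m-((n:ℤ)+1)) * ∑ i ∈ Icc 1 n, ∑ j ∈ Icc 1 n,
        (m-(i:ℤ))*(m-(j:ℤ))*((n:ℤ)+1-(i:ℤ))*((n:ℤ)+1-(j:ℤ))*|(j:ℤ)-(i:ℤ)| := by
    rw [Finset.mul_sum]
    refine Finset.sum_congr rfl fun i hi => ?_
    rw [Finset.mul_sum]
    refine Finset.sum_congr rfl fun j hj => ?_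
    rw [P3_top3 (Finset.mem_Icc.mp hi).2 (Finset.mem_Icc.mp hj).2]
    push_cast; ring
  have h2 : (∑ i ∈ Icc 1 n, ∑ k ∈ Icc 1 n,
        (m-(i:ℤ))*(m-((n+1:ℕ):ℤ))*(m-(k:ℤ))*P3 (i:ℤ) ((n+1:ℕ):ℤ) (k:ℤ))
      = (m-((n:ℤ)+1)) * ∑ i ∈ Icc 1 n, ∑ j ∈ Icc 1 n,
        (m-(i:ℤ))*(m-(j:ℤ))*((n:ℤ)+1-(i:ℤ))*((n:ℤ)+1-(j:ℤ))*|(j:ℤ)-(i:ℤ)| := by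
    rw [Finset.mul_sum]
    refine Finset.sum_congr rfl fun i hi => ?_
    rw [Finset.mul_sum]
    refine Finset.sum_congr rfl fun k hk => ?_
    rw [P3_top2 (Finset.mem_Icc.mp hi).2 (Finset.mem_Icc.mp hk).2]
    push_cast; ring
  have h1 : (∑ j ∈ Icc 1 n, ∑ k ∈ Icc 1 n,
        (m-((n+1:ℕ):ℤ))*(m-(j:ℤ))*(m-(k:ℤ))*P3 ((n+1:ℕ):ℤ) (j:ℤ) (k:ℤ))
      = (m-((n:ℤ)+1)) * ∑ i ∈ Icc 1 n, ∑ j ∈ Icc 1 n,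
        (m-(i:ℤ))*(m-(j:ℤ))*((n:ℤ)+1-(i:ℤ))*((n:ℤ)+1-(j:ℤ))*|(j:ℤ)-(i:ℤ)| := by
    rw [Finset.mul_sum]
    refine Finset.sum_congr rfl fun j hj => ?_
    rw [Finset.mul_sum]
    refine Finset.sum_congr rfl fun k hk => ?_
    rw [P3_top1 (Finset.mem_Icc.mp hj).2 (Finset.mem_Icc.mp hk).2]
    push_cast; ring
  rw [h3, h2, h1]
  ring

lemma B2S_closed (m : ℤ) (n : ℕ) : 840 * B2S m n =
    (28)*m*m*m*(n:ℤ)*(n:ℤ)*(n:ℤ)*(n:ℤ)*(n:ℤ)*(n:ℤ) + (-140)*m*m*m*(n:ℤ)*(n:ℤ)*(n:ℤ)*(n:ℤ) + (112)*m*m*m*(n:ℤ)*(n:ℤ) + (-42)*m*m*(n:ℤ)*(n:ℤ)*(n:ℤ)*(n:ℤ)*(n:ℤ)*(n:ℤ)*(n:ℤ) + (-42)*m*m*(n:ℤ)*(n:ℤ)*(n:ℤ)*(n:ℤ)*(n:ℤ)*(n:ℤ) + (210)*m*m*(n:ℤ)*(n:ℤ)*(n:ℤ)*(n:ℤ)*(n:ℤ)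 + (210)*m*m*(n:ℤ)*(n:ℤ)*(n:ℤ)*(n:ℤ) + (-168)*m*m*(n:ℤ)*(n:ℤ)*(n:ℤ) + (-168)*m*m*(n:ℤ)*(n:ℤ) + (18)*m*(n:ℤ)*(n:ℤ)*(n:ℤ)*(n:ℤ)*(n:ℤ)*(n:ℤ)*(n:ℤ)*(n:ℤ) + (42)*m*(n:ℤ)*(n:ℤ)*(n:ℤ)*(n:ℤ)*(n:ℤ)*(n:ℤ)*(n:ℤ) + (-70)*m*(n:ℤ)*(n:ℤ)*(n:ℤ)*(n:ℤ)*(n:ℤ)*(n:ℤ) + (-210)*m*(n:ℤ)*(n:ℤ)*(n:ℤ)*(n:ℤ)*(n:ℤ) + (-28)*m*(n:ℤ)*(n:ℤ)*(n:ℤ)*(n:ℤ) + (168)*m*(n:ℤ)*(n:ℤ)*(n:ℤ) + (80)*m*(n:ℤ)*(n:ℤ) + (-2)*(n:ℤ)*(n:ℤ)*(n:ℤ)*(n:ℤ)*(n:ℤ)*(n:ℤ)*(n:ℤ)*(n:ℤ)*(n:ℤ) + (-9)*(n:ℤ)*(n:ℤ)*(n:ℤ)*(n:ℤ)*(n:ℤ)*(n:ℤ)*(n:ℤ)*(n:ℤ)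 + (42)*(n:ℤ)*(n:ℤ)*(n:ℤ)*(n:ℤ)*(n:ℤ)*(n:ℤ) + (42)*(n:ℤ)*(n:ℤ)*(n:ℤ)*(n:ℤ)*(n:ℤ) + (-21)*(n:ℤ)*(n:ℤ)*(n:ℤ)*(n:ℤ) + (-40)*(n:ℤ)*(n:ℤ)*(n:ℤ) + (-12)*(n:ℤ)*(n:ℤ) := by
  induction n with
  | zero => simp [B2S]
  | succ k ih =>
    rw [B2S_rec]
    have hC := C3S_closed m ((k:ℤ)+1) k
    push_cast
    push_cast at ih hC
    linear_combination ih + 6*(m-(k:ℤ)-1)*hC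

def AS (n : ℕ) : ℤ :=
  ∑ i ∈ Icc 1 n, ∑ j ∈ Icc 1 n, ∑ k ∈ Icc 1 n, ∑ l ∈ Icc 1 n,
    P4 (i:ℤ) (j:ℤ) (k:ℤ) (l:ℤ)

lemma AS_rec (n : ℕ) : AS (n+1) = AS n + 4 * B2S ((n:ℤ)+1) n := by
  simp only [AS, B2S]
  simp only [Finset.sum_Icc_succ_top (Nat.le_add_left 1 n)]
  simp only [P4_z12, P4_z13, P4_z14, P4_z23, P4_z24, P4_z34,
    Finset.sum_const_zero, add_zero, Finset.sum_add_distrib]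
  have e4 : (∑ i ∈ Icc 1 n, ∑ j ∈ Icc 1 n, ∑ k ∈ Icc 1 n,
        P4 (i:ℤ) (j:ℤ) (k:ℤ) ((n+1:ℕ):ℤ))
      = ∑ i ∈ Icc 1 n, ∑ j ∈ Icc 1 n, ∑ k ∈ Icc 1 n,
        ((n:ℤ)+1-(i:ℤ))*((n:ℤ)+1-(j:ℤ))*((n:ℤ)+1-(k:ℤ))*P3 (i:ℤ) (j:ℤ) (k:ℤ) :=
    Finset.sum_congr rfl fun i hi => Finset.sum_congr rfl fun j hj =>
      Finset.sum_congr rfl fun k hk =>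
        P4_top4 (Finset.mem_Icc.mp hi).2 (Finset.mem_Icc.mp hj).2 (Finset.mem_Icc.mp hk).2
  have e3 : (∑ i ∈ Icc 1 n, ∑ j ∈ Icc 1 n, ∑ k ∈ Icc 1 n,
        P4 (i:ℤ) (j:ℤ) ((n+1:ℕ):ℤ) (k:ℤ))
      = ∑ i ∈ Icc 1 n, ∑ j ∈ Icc 1 n, ∑ k ∈ Icc 1 n,
        ((n:ℤ)+1-(i:ℤ))*((n:ℤ)+1-(j:ℤ))*((n:ℤ)+1-(k:ℤ))*P3 (i:ℤ) (j:ℤ) (k:ℤ) :=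
    Finset.sum_congr rfl fun i hi => Finset.sum_congr rfl fun j hj =>
      Finset.sum_congr rfl fun k hk =>
        P4_top3 (Finset.mem_Icc.mp hi).2 (Finset.mem_Icc.mp hj).2 (Finset.mem_Icc.mp hk).2
  have e2 : (∑ i ∈ Icc 1 n, ∑ j ∈ Icc 1 n, ∑ k ∈ Icc 1 n,
        P4 (i:ℤ) ((n+1:ℕ):ℤ) (j:ℤ) (k:ℤ))
      = ∑ i ∈ Icc 1 n, ∑ j ∈ Icc 1 n, ∑ k ∈ Icc 1 n,
        ((n:ℤ)+1-(i:ℤ))*((n:ℤ)+1-(j:ℤ))*((n:ℤ)+1-(k:ℤ))*P3 (i:ℤ) (j:ℤ) (k:ℤ) :=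
    Finset.sum_congr rfl fun i hi => Finset.sum_congr rfl fun j hj =>
      Finset.sum_congr rfl fun k hk =>
        P4_top2 (Finset.mem_Icc.mp hi).2 (Finset.mem_Icc.mp hj).2 (Finset.mem_Icc.mp hk).2
  have e1 : (∑ i ∈ Icc 1 n, ∑ j ∈ Icc 1 n, ∑ k ∈ Icc 1 n,
        P4 ((n+1:ℕ):ℤ) (i:ℤ) (j:ℤ) (k:ℤ))
      = ∑ i ∈ Icc 1 n, ∑ j ∈ Icc 1 n, ∑ k ∈ Icc 1 n,
        ((n:ℤ)+1-(i:ℤ))*((n:ℤ)+1-(j:ℤ))*((n:ℤ)+1-(k:ℤ))*P3 (i:ℤ) (j:ℤ) (k:ℤ) :=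
    Finset.sum_congr rfl fun i hi => Finset.sum_congr rfl fun j hj =>
      Finset.sum_congr rfl fun k hk =>
        P4_top1 (Finset.mem_Icc.mp hi).2 (Finset.mem_Icc.mp hj).2 (Finset.mem_Icc.mp hk).2
  rw [e4, e3, e2, e1]
  ring

lemma AS_closed (n : ℕ) : 1050 * AS n =
    (1)*(n:ℤ)*(n:ℤ)*(n:ℤ)*(n:ℤ)*(n:ℤ)*(n:ℤ)*(n:ℤ)*(n:ℤ)*(n:ℤ)*(n:ℤ) + (-15)*(n:ℤ)*(n:ℤ)*(n:ℤ)*(n:ℤ)*(n:ℤ)*(n:ℤ)*(n:ℤ)*(n:ℤ) + (63)*(n:ℤ)*(n:ℤ)*(n:ℤ)*(n:ℤ)*(n:ℤ)*(n:ℤ) + (-85)*(n:ℤ)*(n:ℤ)*(n:ℤ)*(n:ℤ) + (36)*(n:ℤ)*(n:ℤ) := by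
  induction n with
  | zero => simp [AS]
  | succ k ih =>
    rw [AS_rec]
    have hB := B2S_closed ((k:ℤ)+1) k
    push_cast
    push_cast at ih hB
    linear_combination ih + 5*hB

lemma det4 (a b c d : ℤ) : (Matrix.vandermonde ![a,b,c,d]).det
    = (b-a)*(c-a)*(d-a)*(c-b)*(d-b)*(d-c) := by
  rw [Matrix.det_vandermonde]
  simp [Fin.prod_univ_succ, Fin.prod_Ioi_zero, Fin.prod_Ioi_succ]
  ring

lemma c1 (n : ℕ) : ((n.choose 1 : ℕ) : ℤ) = (n:ℤ) := by simp

lemma c2 (n : ℕ) : (2:ℤ) * (n.choose 2 : ℤ) = (n:ℤ)*((n:ℤ)-1) := by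
  induction n with
  | zero => simp
  | succ k ih =>
    rw [Nat.choose_succ_succ, Nat.choose_one_right]
    push_cast
    linear_combination ih

lemma c3 (n : ℕ) : (6:ℤ) * (n.choose 3 : ℤ) = (n:ℤ)*((n:ℤ)-1)*((n:ℤ)-2) := by
  induction n with
  | zero => simp
  | succ k ih =>
    rw [Nat.choose_succ_succ]
    push_cast
    linear_combination ih + 3*c2 k

lemma c4 (n : ℕ) : (24:ℤ) * (n.choose 4 : ℤ) = (n:ℤ)*((n:ℤ)-1)*((n:ℤ)-2)*((n:ℤ)-3) := by
  induction n with
  | zero => simp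
  | succ k ih =>
    rw [Nat.choose_succ_succ]
    push_cast
    linear_combination ih + 4*c3 k

lemma c5 (n : ℕ) : (120:ℤ) * (n.choose 5 : ℤ) = (n:ℤ)*((n:ℤ)-1)*((n:ℤ)-2)*((n:ℤ)-3)*((n:ℤ)-4) := by
  induction n with
  | zero => simp
  | succ k ih =>
    rw [Nat.choose_succ_succ]
    push_cast
    linear_combination ih + 5*c4 k

/-- Vandermonde-determinant formula for the `FH_2` Hilbert series coefficients:
`21 · ∑_{1≤i,j,k,l≤n} |det V(i,j,k,l)| = 288 · C(n+1,5) · C(n+3,5)`,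
where `V(i,j,k,l)` is the 4×4 Vandermonde matrix with nodes `(i,j,k,l)` and
`288 = 1!·2!·3!·4!`. -/
theorem fh2_vandermonde_formula (n : ℕ) :
    21 * ∑ i ∈ Finset.Icc 1 n, ∑ j ∈ Finset.Icc 1 n, ∑ k ∈ Finset.Icc 1 n,
        ∑ l ∈ Finset.Icc 1 n, |(Matrix.vandermonde ![(i : ℤ), (j : ℤ), (k : ℤ), (l : ℤ)]).det| =
      288 * ((n + 1).choose 5 : ℤ) * ((n + 3).choose 5 : ℤ) := by
  simp only [det4]
  have hsum : (∑ i ∈ Finset.Icc 1 n, ∑ j ∈ Finset.Icc 1 n, ∑ k ∈ Finset.Icc 1 n,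
      ∑ l ∈ Finset.Icc 1 n,
        |((j:ℤ)-(i:ℤ))*((k:ℤ)-(i:ℤ))*((l:ℤ)-(i:ℤ))*((k:ℤ)-(j:ℤ))*((l:ℤ)-(j:ℤ))*((l:ℤ)-(k:ℤ))|)
      = AS n := rfl
  rw [hsum]
  refine mul_left_cancel₀ (show (50:ℤ) ≠ 0 by norm_num) ?_
  have h1050 := AS_closed n
  have h5a := c5 (n+1)
  have h5b := c5 (n+3)
  push_cast at h5a h5b
  linear_combination h1050 - 120*(((n+3).choose 5 : ℕ) : ℤ)*h5a
    - ((n:ℤ)+1)*(n:ℤ)*((n:ℤ)-1)*((n:ℤ)-2)*((n:ℤ)-3)*h5b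
end

section
/- In ℚ[[t]], one has (1 − t)^8 · ∑_{r≥0} ( ∑_{n+k=r, n,k≥0} (n+1)²(k+1)(n+k+2)(k+2)(n+k+3)/12 ) · t^r = (1 + t)(1 + 5t + t²). That is, the fully unrefined Hilbert series of (the main branch of) the FM_2 moduli space, obtained by summing the dimensions of the su(4)×su(2) representations [n,k,0; n] over n+k = r, equals (1+t)(1+5t+t²)/(1−t)^8. -/
/-- `cc j r = (r+1)(r+2)⋯(r+j)/j! = C(r+j, j)` as a rational number. -/
noncomputable def cc (j r : ℕ) : ℚ :=
  (∏ i ∈ Finset.range j, ((r : ℚ) + 1 + i)) / (Nat.factorial j : ℚ)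

lemma cc_zero (r : ℕ) : cc 0 r = 1 := by simp [cc]

lemma cc_r_zero (j : ℕ) : cc j 0 = 1 := by
  have h : (∏ i ∈ Finset.range j, (((0 : ℕ) : ℚ) + 1 + i)) = (Nat.factorial j : ℚ) := by
    rw [← Finset.prod_range_add_one_eq_factorial]
    push_cast
    exact Finset.prod_congr rfl fun i _ => by ring
  rw [cc, h, div_self (by exact_mod_cast j.factorial_ne_zero)]

lemma cc_pascal (j r : ℕ) : cc (j + 1) (r + 1) = cc (j + 1) r + cc j (r + 1) := by
  have hfacne : ((Nat.factorial j : ℚ)) ≠ 0 := by exact_mod_cast j.factorial_ne_zero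
  have hj1 : ((j : ℚ) + 1) ≠ 0 := by positivity
  have hfac : ((Nat.factorial (j + 1) : ℚ)) = ((j : ℚ) + 1) * (Nat.factorial j : ℚ) := by
    rw [Nat.factorial_succ]; push_cast; ring
  have h1 : (∏ i ∈ Finset.range (j + 1), (((r + 1 : ℕ) : ℚ) + 1 + i))
      = ((r : ℚ) + 2 + j) * ∏ i ∈ Finset.range j, ((r : ℚ) + 2 + i) := by
    rw [Finset.prod_range_succ, mul_comm]
    congr 1
    · push_cast; ring
    · exact Finset.prod_congr rfl fun i _ => by push_cast; ring
  have h2 : (∏ i ∈ Finset.range (j + 1), ((r : ℚ) + 1 + i))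
      = ((r : ℚ) + 1) * ∏ i ∈ Finset.range j, ((r : ℚ) + 2 + i) := by
    rw [Finset.prod_range_succ', mul_comm]
    congr 1
    · push_cast; ring
    · exact Finset.prod_congr rfl fun i _ => by push_cast; ring
  have h3 : (∏ i ∈ Finset.range j, (((r + 1 : ℕ) : ℚ) + 1 + i))
      = ∏ i ∈ Finset.range j, ((r : ℚ) + 2 + i) :=
    Finset.prod_congr rfl fun i _ => by push_cast; ring
  unfold cc
  rw [h1, h2, h3, hfac]
  field_simp
  ring

lemma one_sub_X_mul_cc_succ (j : ℕ) :
    (1 - PowerSeries.X : PowerSeries ℚ) * PowerSeries.mk (fun r => cc (j + 1) r)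
      = PowerSeries.mk (fun r => cc j r) := by
  ext n
  rw [sub_mul, one_mul, map_sub]
  cases n with
  | zero =>
      simp [PowerSeries.coeff_zero_X_mul, cc_r_zero]
  | succ n =>
      rw [PowerSeries.coeff_succ_X_mul]
      simp only [PowerSeries.coeff_mk]
      have := cc_pascal j n
      linarith

lemma one_sub_X_mul_cc_zero :
    (1 - PowerSeries.X : PowerSeries ℚ) * PowerSeries.mk (fun r => cc 0 r) = 1 := by
  ext n
  rw [sub_mul, one_mul, map_sub]
  cases n with
  | zero => simp [PowerSeries.coeff_zero_X_mul, cc_zero]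
  | succ n => simp [PowerSeries.coeff_succ_X_mul, cc_zero, PowerSeries.coeff_one]

lemma pow_mul_cc (j : ℕ) :
    (1 - PowerSeries.X : PowerSeries ℚ) ^ (j + 1) * PowerSeries.mk (fun r => cc j r) = 1 := by
  induction j with
  | zero => simpa using one_sub_X_mul_cc_zero
  | succ j ih =>
      rw [pow_succ, mul_assoc, one_sub_X_mul_cc_succ, ih]

/-- Closed form for the partial sum. -/
noncomputable def Apoly (m x : ℚ) : ℚ :=
  (29/60 : ℚ) * m^1 + (59/72 : ℚ) * m^1 * x^1 + (23/45 : ℚ) * m^1 * x^2 + (5/36 : ℚ) * m^1 * x^3 + (1/72 : ℚ) * m^1 * x^4 + (7/8 : ℚ) * m^2 + (83/48 : ℚ) * m^2 * x^1 + (59/48 : ℚ) * m^2 * x^2 + (3/8 : ℚ) * m^2 * x^3 + (1/24 : ℚ) * m^2 * x^4 + (-1/12 : ℚ) * m^3 + (19/72 : ℚ) * m^3 * x^1 + (31/72 : ℚ) * m^3 * x^2 + (7/36 : ℚ) * m^3 * x^3 + (1/36 : ℚ) * m^3 * x^4 + (-3/8 : ℚ) * m^4 + (-9/16 : ℚ)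 * m^4 * x^1 + (-13/48 : ℚ) * m^4 * x^2 + (-1/24 : ℚ) * m^4 * x^3 + (1/10 : ℚ) * m^5 + (1/12 : ℚ) * m^5 * x^1 + (1/60 : ℚ) * m^5 * x^2

lemma sum_closed (x : ℚ) : ∀ m : ℕ,
    (∑ n ∈ Finset.range m,
      ((n : ℚ) + 1) ^ 2 * ((x - n) + 1) * ((n : ℚ) + (x - n) + 2) *
        ((x - n) + 2) * ((n : ℚ) + (x - n) + 3) / 12) = Apoly m x := by
  intro m
  induction m with
  | zero => simp [Apoly]
  | succ m ih =>
      rw [Finset.sum_range_succ, ih]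
      unfold Apoly
      push_cast
      ring

lemma cc4 (r : ℕ) : cc 4 r = ((r:ℚ)+1)*((r:ℚ)+2)*((r:ℚ)+3)*((r:ℚ)+4)/24 := by
  have : Finset.range 4 = {0, 1, 2, 3} := rfl
  rw [cc, this]
  norm_num [Nat.factorial]
  ring

lemma cc5 (r : ℕ) : cc 5 r = ((r:ℚ)+1)*((r:ℚ)+2)*((r:ℚ)+3)*((r:ℚ)+4)*((r:ℚ)+5)/120 := by
  have : Finset.range 5 = {0, 1, 2, 3, 4} := rfl
  rw [cc, this]
  norm_num [Nat.factorial]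
  ring

lemma cc6 (r : ℕ) : cc 6 r = ((r:ℚ)+1)*((r:ℚ)+2)*((r:ℚ)+3)*((r:ℚ)+4)*((r:ℚ)+5)*((r:ℚ)+6)/720 := by
  have : Finset.range 6 = {0, 1, 2, 3, 4, 5} := rfl
  rw [cc, this]
  norm_num [Nat.factorial]
  ring

lemma cc7 (r : ℕ) : cc 7 r = ((r:ℚ)+1)*((r:ℚ)+2)*((r:ℚ)+3)*((r:ℚ)+4)*((r:ℚ)+5)*((r:ℚ)+6)*((r:ℚ)+7)/5040 := by
  have : Finset.range 7 = {0, 1, 2, 3, 4, 5, 6} := rfl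
  rw [cc, this]
  norm_num [Nat.factorial]
  ring

lemma S_eq (r : ℕ) :
    (∑ p ∈ Finset.HasAntidiagonal.antidiagonal r,
      ((p.1 : ℚ) + 1) ^ 2 * ((p.2 : ℚ) + 1) * ((p.1 : ℚ) + (p.2 : ℚ) + 2) *
        ((p.2 : ℚ) + 2) * ((p.1 : ℚ) + (p.2 : ℚ) + 3) / 12)
    = -cc 4 r + 9 * cc 5 r - 21 * cc 6 r + 14 * cc 7 r := by
  rw [Finset.Nat.sum_antidiagonal_eq_sum_range_succ_mk]
  have hcongr : (∑ i ∈ Finset.range (r + 1),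
        ((i : ℚ) + 1) ^ 2 * (((r - i : ℕ) : ℚ) + 1) * ((i : ℚ) + ((r - i : ℕ) : ℚ) + 2) *
          (((r - i : ℕ) : ℚ) + 2) * ((i : ℚ) + ((r - i : ℕ) : ℚ) + 3) / 12)
      = ∑ n ∈ Finset.range (r + 1),
        ((n : ℚ) + 1) ^ 2 * (((r : ℚ) - n) + 1) * ((n : ℚ) + ((r : ℚ) - n) + 2) *
          (((r : ℚ) - n) + 2) * ((n : ℚ) + ((r : ℚ) - n) + 3) / 12 := by
    refine Finset.sum_congr rfl fun i hi => ?_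
    have hle : i ≤ r := Finset.mem_range_succ_iff.mp hi
    rw [Nat.cast_sub hle]
  rw [hcongr, sum_closed (r : ℚ) (r + 1), cc4, cc5, cc6, cc7]
  unfold Apoly
  push_cast
  ring

/-- The fully unrefined Hilbert series of the main branch of the `FM_2` moduli space:
`(1 − t)^8 · ∑_r (∑_{n+k=r} (n+1)²(k+1)(n+k+2)(k+2)(n+k+3)/12) t^r = (1+t)(1+5t+t²)`. -/
theorem fm2_unrefined_hilbert_series :
    (1 - (PowerSeries.X : PowerSeries ℚ)) ^ 8 *
        PowerSeries.mk (fun r : ℕ =>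
          ∑ p ∈ Finset.HasAntidiagonal.antidiagonal r,
            ((p.1 : ℚ) + 1) ^ 2 * ((p.2 : ℚ) + 1) * ((p.1 : ℚ) + (p.2 : ℚ) + 2) *
              ((p.2 : ℚ) + 2) * ((p.1 : ℚ) + (p.2 : ℚ) + 3) / 12) =
      (1 + PowerSeries.X) * (1 + 5 * PowerSeries.X + PowerSeries.X ^ 2) := by
  have key : PowerSeries.mk (fun r : ℕ =>
        ∑ p ∈ Finset.HasAntidiagonal.antidiagonal r,
          ((p.1 : ℚ) + 1) ^ 2 * ((p.2 : ℚ) + 1) * ((p.1 : ℚ) + (p.2 : ℚ) + 2) *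
            ((p.2 : ℚ) + 2) * ((p.1 : ℚ) + (p.2 : ℚ) + 3) / 12)
      = -(PowerSeries.mk fun r => cc 4 r) + PowerSeries.C (9 : ℚ) * PowerSeries.mk (fun r => cc 5 r)
        - PowerSeries.C (21 : ℚ) * PowerSeries.mk (fun r => cc 6 r)
        + PowerSeries.C (14 : ℚ) * PowerSeries.mk (fun r => cc 7 r) := by
    ext n
    simp only [map_add, map_sub, map_neg, PowerSeries.coeff_C_mul, PowerSeries.coeff_mk]
    have := S_eq n
    linarith
  rw [key]
  simp only [map_ofNat]
  have h4 := pow_mul_cc 4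
  have h5 := pow_mul_cc 5
  have h6 := pow_mul_cc 6
  have h7 := pow_mul_cc 7
  norm_num at h4 h5 h6 h7
  linear_combination (14 : PowerSeries ℚ) * h7
    - 21 * (1 - PowerSeries.X) * h6
    + 9 * (1 - PowerSeries.X) ^ 2 * h5
    - (1 - PowerSeries.X) ^ 3 * h4
end

section
/- For all natural numbers m and k: (m+1)(k+1)(m+k+2)(k+2)(m+k+3)/12 = ∑_{h=0}^{⌊m/2⌋} T_h, where T_h := ∑_{k₁,k₂ ≥ 0, k₁+k₂ ≤ k} (2k₁+m−2h+1)(2k₂+m−2h+1) when m − 2h > 0, and T_h := ∑_{k₁,k₂ ≥ 0, k₁+k₂ ≤ k, k₁+k₂ ≡ k (mod 2)} (2k₁+1)(2k₂+1) when m = 2h. This is the dimension identity underlying the general branching rule of the su(4) representation [m,k,0] into su(2)×su(2) representations [2k₁+m−2h; 2k₂+m−2h]. -/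
open Finset

/-- Sum of an arithmetic progression. -/
lemma su4_sum_lin (d N : ℕ) : ∑ i ∈ range N, (2 * i + d + 1) = N * (N + d) := by
  induction N with
  | zero => simp
  | succ n ih => rw [sum_range_succ, ih]; ring

/-- Triangle sum rewritten as a sum over diagonals. -/
lemma su4_tri (g : ℕ → ℕ → ℕ) (k : ℕ) :
    ∑ i ∈ range (k + 1), ∑ j ∈ range (k + 1 - i), g i j =
      ∑ s ∈ range (k + 1), ∑ a ∈ range (s + 1), g a (s - a) := by
  induction k with
  | zero => simp
  | succ k ih =>
    rw [sum_range_succ (n := k + 1)]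
    have h1 : ∑ i ∈ range (k + 1), ∑ j ∈ range (k + 1 + 1 - i), g i j =
        ∑ i ∈ range (k + 1), (∑ j ∈ range (k + 1 - i), g i j + g i (k + 1 - i)) := by
      refine sum_congr rfl fun i hi => ?_
      have hik : i ≤ k := by simpa [Nat.lt_succ_iff] using hi
      have : k + 1 + 1 - i = (k + 1 - i) + 1 := by omega
      rw [this, sum_range_succ]
    rw [h1, sum_add_distrib, ih, sum_range_succ (n := k + 1)]
    have h2 : ∑ a ∈ range (k + 1 + 1), g a (k + 1 - a) =
        ∑ a ∈ range (k + 1), g a (k + 1 - a) + g (k + 1) 0 := by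
      rw [sum_range_succ]; simp
    rw [h2]
    have h3 : k + 1 + 1 - (k + 1) = 1 := by omega
    rw [h3]
    simp [add_assoc]

/-- Closed form for a diagonal sum. -/
lemma su4_diag (d s : ℕ) :
    3 * ∑ a ∈ range (s + 1), (2 * a + d + 1) * (2 * (s - a) + d + 1) =
      (s + 1) * (2 * s ^ 2 + 4 * s + 3) + 6 * d * (s + 1) ^ 2 + 3 * d ^ 2 * (s + 1) := by
  induction s with
  | zero => simp; ring
  | succ s ih =>
    rw [sum_range_succ]
    have h1 : ∑ a ∈ range (s + 1), (2 * a + d + 1) * (2 * (s + 1 - a) + d + 1) =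
        ∑ a ∈ range (s + 1),
          ((2 * a + d + 1) * (2 * (s - a) + d + 1) + 2 * (2 * a + d + 1)) := by
      refine sum_congr rfl fun a ha => ?_
      have hak : a ≤ s := by simpa [Nat.lt_succ_iff] using ha
      have : s + 1 - a = (s - a) + 1 := by omega
      rw [this]; ring
    rw [h1, sum_add_distrib, ← mul_sum, su4_sum_lin d (s + 1)]
    have h2 : s + 1 - (s + 1) = 0 := by omega
    rw [h2, Nat.mul_add, Nat.mul_add, ih]
    ring

def su4_Srect (k d : ℕ) : ℕ :=
  ∑ k₁ ∈ range (k + 1), ∑ k₂ ∈ range (k + 1 - k₁), (2 * k₁ + d + 1) * (2 * k₂ + d + 1)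

def su4_Ppar (k : ℕ) : ℕ :=
  ∑ k₁ ∈ range (k + 1), ∑ k₂ ∈ range (k + 1 - k₁),
    if (k₁ + k₂) % 2 = k % 2 then (2 * k₁ + 1) * (2 * k₂ + 1) else 0

/-- Closed form for the rectangular branching sum. -/
lemma su4_Srect_closed (k d : ℕ) :
    12 * su4_Srect k d =
      2 * (k + 1) * (k + 2) * ((k + 1) ^ 2 + (k + 1) + 1 + 2 * d * (2 * k + 3) + 3 * d ^ 2) := by
  rw [su4_Srect, su4_tri (fun i j => (2 * i + d + 1) * (2 * j + d + 1)) k]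
  induction k with
  | zero =>
    rw [sum_range_one]
    have := su4_diag d 0
    rw [sum_range_one] at this ⊢
    nlinarith [this]
  | succ k ih =>
    rw [sum_range_succ, Nat.mul_add, ih]
    have hd := su4_diag d (k + 1)
    nlinarith [hd]

/-- Closed form for the parity-constrained sum. -/
lemma su4_Ppar_closed (k : ℕ) :
    12 * su4_Ppar k = (k + 1) * (k + 2) ^ 2 * (k + 3) := by
  have key : ∀ k : ℕ, su4_Ppar k =
      ∑ s ∈ range (k + 1),
        if s % 2 = k % 2 then ∑ a ∈ range (s + 1), (2 * a + 1) * (2 * (s - a) + 1) else 0 := by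
    intro k
    rw [su4_Ppar,
      su4_tri (fun i j => if (i + j) % 2 = k % 2 then (2 * i + 1) * (2 * j + 1) else 0) k]
    refine sum_congr rfl fun s hs => ?_
    have h1 : ∑ a ∈ range (s + 1),
        (if (a + (s - a)) % 2 = k % 2 then (2 * a + 1) * (2 * (s - a) + 1) else 0) =
        ∑ a ∈ range (s + 1),
        (if s % 2 = k % 2 then (2 * a + 1) * (2 * (s - a) + 1) else 0) := by
      refine sum_congr rfl fun a ha => ?_
      have hak : a ≤ s := by simpa [Nat.lt_succ_iff] using ha
      have : a + (s - a) = s := by omega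
      rw [this]
    rw [h1]
    split <;> simp
  -- two-step induction on k
  induction k using Nat.strong_induction_on with
  | _ k ih =>
    match k with
    | 0 => rw [key]; decide
    | 1 => rw [key]; decide
    | (k + 2) =>
      have ihk := ih k (by omega)
      rw [key] at ihk ⊢
      rw [sum_range_succ, sum_range_succ]
      have hmod1 : ¬ ((k + 1) % 2 = (k + 2) % 2) := by omega
      have hmod2 : (k + 2) % 2 = (k + 2) % 2 := rfl
      have hcong : ∑ s ∈ range (k + 1),
          (if s % 2 = (k + 2) % 2 then ∑ a ∈ range (s + 1), (2 * a + 1) * (2 * (s - a) + 1) else 0)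
          = ∑ s ∈ range (k + 1),
          (if s % 2 = k % 2 then ∑ a ∈ range (s + 1), (2 * a + 1) * (2 * (s - a) + 1) else 0) := by
      -- s % 2 = (k+2) % 2 ↔ s % 2 = k % 2
        refine sum_congr rfl fun s hs => ?_
        have : (s % 2 = (k + 2) % 2) ↔ (s % 2 = k % 2) := by omega
        simp only [this]
      rw [if_neg hmod1, if_pos hmod2, hcong]
      have hd := su4_diag 0 (k + 2)
      simp only [Nat.mul_zero, Nat.zero_mul, Nat.add_zero, Nat.zero_add, Nat.mul_one,
        Nat.pow_two] at hd
      nlinarith [ihk, su4_diag 0 (k + 2)]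

def su4_RHS (m k : ℕ) : ℕ :=
  ∑ h ∈ range (m / 2 + 1), if 2 * h = m then su4_Ppar k else su4_Srect k (m - 2 * h)

lemma su4_RHS_rec (m k : ℕ) :
    su4_RHS (m + 2) k = su4_Srect k (m + 2) + su4_RHS m k := by
  have hdiv : (m + 2) / 2 + 1 = (m / 2 + 1) + 1 := by omega
  rw [su4_RHS, hdiv, sum_range_succ']
  have h0 : (if 2 * 0 = m + 2 then su4_Ppar k else su4_Srect k (m + 2 - 2 * 0)) =
      su4_Srect k (m + 2) := by
    rw [if_neg (by omega)]
    norm_num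
  rw [h0, Nat.add_comm]
  congr 1
  refine sum_congr rfl fun h hh => ?_
  have e1 : (2 * (h + 1) = m + 2) ↔ (2 * h = m) := by omega
  have e2 : m + 2 - 2 * (h + 1) = m - 2 * h := by omega
  simp only [e1, e2]

lemma su4_main (m k : ℕ) :
    12 * su4_RHS m k = (m + 1) * (k + 1) * (m + k + 2) * (k + 2) * (m + k + 3) := by
  induction m using Nat.strong_induction_on with
  | _ m ih =>
    match m with
    | 0 =>
      rw [su4_RHS]
      have h01 : (0 : ℕ) / 2 + 1 = 1 := rfl
      rw [h01, sum_range_one, if_pos (by norm_num), su4_Ppar_closed]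
      ring
    | 1 =>
      rw [su4_RHS]
      have h11 : (1 : ℕ) / 2 + 1 = 1 := rfl
      rw [h11, sum_range_one, if_neg (by omega)]
      have h12 : (1 : ℕ) - 2 * 0 = 1 := by norm_num
      rw [h12, su4_Srect_closed]
      ring
    | (m + 2) =>
      rw [su4_RHS_rec, Nat.mul_add, ih m (by omega), su4_Srect_closed]
      ring

/-- Dimension identity underlying the general branching rule of the `su(4)`
representation `[m,k,0]` into `su(2)×su(2)` representations `[2k₁+m−2h; 2k₂+m−2h]`:
`(m+1)(k+1)(m+k+2)(k+2)(m+k+3)/12 = ∑_{h=0}^{⌊m/2⌋} T_h`, where for `m − 2h > 0`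
`T_h = ∑_{k₁+k₂≤k} (2k₁+m−2h+1)(2k₂+m−2h+1)` and for `m = 2h`
`T_h = ∑_{k₁+k₂≤k, k₁+k₂≡k (mod 2)} (2k₁+1)(2k₂+1)`. -/
theorem su4_general_branching_dimension_identity (m k : ℕ) :
    (m + 1) * (k + 1) * (m + k + 2) * (k + 2) * (m + k + 3) / 12 =
      ∑ h ∈ Finset.range (m / 2 + 1),
        if 2 * h = m then
          ∑ k₁ ∈ Finset.range (k + 1), ∑ k₂ ∈ Finset.range (k + 1 - k₁),
            if (k₁ + k₂) % 2 = k % 2 then (2 * k₁ + 1) * (2 * k₂ + 1) else 0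
        else
          ∑ k₁ ∈ Finset.range (k + 1), ∑ k₂ ∈ Finset.range (k + 1 - k₁),
            (2 * k₁ + m - 2 * h + 1) * (2 * k₂ + m - 2 * h + 1) := by
  have hr : (∑ h ∈ Finset.range (m / 2 + 1),
      if 2 * h = m then
        ∑ k₁ ∈ Finset.range (k + 1), ∑ k₂ ∈ Finset.range (k + 1 - k₁),
          if (k₁ + k₂) % 2 = k % 2 then (2 * k₁ + 1) * (2 * k₂ + 1) else 0
      else
        ∑ k₁ ∈ Finset.range (k + 1), ∑ k₂ ∈ Finset.range (k + 1 - k₁),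
          (2 * k₁ + m - 2 * h + 1) * (2 * k₂ + m - 2 * h + 1)) = su4_RHS m k := by
    rw [su4_RHS]
    refine sum_congr rfl fun h hh => ?_
    have hhm : 2 * h ≤ m := by
      have := Finset.mem_range.mp hh
      omega
    split
    · rfl
    · refine sum_congr rfl fun k₁ _ => ?_
      refine sum_congr rfl fun k₂ _ => ?_
      have e1 : 2 * k₁ + m - 2 * h + 1 = 2 * k₁ + (m - 2 * h) + 1 := by omega
      have e2 : 2 * k₂ + m - 2 * h + 1 = 2 * k₂ + (m - 2 * h) + 1 := by omega
      rw [e1, e2]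
  rw [hr]
  have := su4_main m k
  omega
end
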